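/- Let α, σ be schedulers, t ∈ (0,1), let p_data be a probability density on ℝ^d with compact support, and let r : ℝ^d → ℝ be a bounded measurable reward function. Define the reward-tilted density p^r(z) = p_data(z)exp(r(z))/Z^r with Z^r = ∫ p_data(z)exp(r(z)) dz > 0, let D_t^r denote the denoiser associated to the data density p^r, and define the value function V_t(x) = log ∫ exp(r(z)) p_{1|t}(z|x) dz. Then for every x ∈ ℝ^d (noting p_t(x) > 0 everywhere), V_t is differentiable at x and D_t^r(x) = D_t(x) + (σ_t²/α_t) ∇V_t(x). -/

import Mathlib

open MeasureTheory Real Matrix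
open scoped BigOperators

noncomputable def gauss1 (y m v : ℝ) : ℝ :=
  (2 * Real.pi * v) ^ (-(1:ℝ)/2) * Real.exp (-(y - m)^2 / (2 * v))

noncomputable def gauss2 (x m : Fin 2 → ℝ) (S : Matrix (Fin 2) (Fin 2) ℝ) : ℝ :=
  (2 * Real.pi)⁻¹ * S.det ^ (-(1:ℝ)/2) *
    Real.exp (-(1/2) * ((x - m) ⬝ᵥ (S⁻¹ *ᵥ (x - m))))

noncomputable def suffStat (μ : Fin 2 → ℝ) (S : Matrix (Fin 2) (Fin 2) ℝ)
    (x : Fin 2 → ℝ) : ℝ :=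
  (μ ⬝ᵥ (S⁻¹ *ᵥ x)) / (μ ⬝ᵥ (S⁻¹ *ᵥ μ))

structure IsScheduler (α σ : ℝ → ℝ) : Prop where
  contDiff_a : ContDiffOn ℝ 1 α (Set.Icc 0 1)
  contDiff_s : ContDiffOn ℝ 1 σ (Set.Icc 0 1)
  a0 : α 0 = 0
  a1 : α 1 = 1
  s0 : σ 0 = 1
  s1 : σ 1 = 0
  mono_a : StrictMonoOn α (Set.Icc 0 1)
  anti_s : StrictAntiOn σ (Set.Icc 0 1)

def IsProbDensity {d : ℕ} (p : (Fin d → ℝ) → ℝ) : Prop :=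
  Measurable p ∧ (∀ z, 0 ≤ p z) ∧ (∫ z, p z) = 1

noncomputable def marginal {d : ℕ} (α σ : ℝ → ℝ) (p : (Fin d → ℝ) → ℝ)
    (t : ℝ) (x : Fin d → ℝ) : ℝ :=
  ∫ z, (∏ j, gauss1 (x j) (α t * z j) ((σ t)^2)) * p z

noncomputable def post {d : ℕ} (α σ : ℝ → ℝ) (p : (Fin d → ℝ) → ℝ)
    (t : ℝ) (z x : Fin d → ℝ) : ℝ :=
  (∏ j, gauss1 (x j) (α t * z j) ((σ t)^2)) * p z / marginal α σ p t x

noncomputable def denoiser {d : ℕ} (α σ : ℝ → ℝ) (p : (Fin d → ℝ) → ℝ)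
    (t : ℝ) (x : Fin d → ℝ) : Fin d → ℝ :=
  ∫ z, post α σ p t z x • z

noncomputable def glassLik {d : ℕ} (μ : Fin 2 → ℝ) (S : Matrix (Fin 2) (Fin 2) ℝ)
    (x1 x2 z : Fin d → ℝ) : ℝ :=
  ∏ j, gauss2 ![x1 j, x2 j] (z j • μ) S

noncomputable def glassZ {d : ℕ} (μ : Fin 2 → ℝ) (S : Matrix (Fin 2) (Fin 2) ℝ)
    (p : (Fin d → ℝ) → ℝ) (x1 x2 : Fin d → ℝ) : ℝ :=
  ∫ w, glassLik μ S x1 x2 w * p w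

noncomputable def glassPost {d : ℕ} (μ : Fin 2 → ℝ) (S : Matrix (Fin 2) (Fin 2) ℝ)
    (p : (Fin d → ℝ) → ℝ) (x1 x2 z : Fin d → ℝ) : ℝ :=
  glassLik μ S x1 x2 z * p z / glassZ μ S p x1 x2

noncomputable def glassDenoiser {d : ℕ} (μ : Fin 2 → ℝ) (S : Matrix (Fin 2) (Fin 2) ℝ)
    (p : (Fin d → ℝ) → ℝ) (x1 x2 : Fin d → ℝ) : Fin d → ℝ :=
  ∫ z, glassPost μ S p x1 x2 z • z

lemma gauss1_pos {v : ℝ} (hv : 0 < v) (y m : ℝ) : 0 < gauss1 y m v := by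
  have h : 0 < 2 * Real.pi * v := by positivity
  exact mul_pos (Real.rpow_pos_of_pos h _) (Real.exp_pos _)

lemma gauss1_le {v : ℝ} (hv : 0 < v) (y m : ℝ) :
    gauss1 y m v ≤ (2 * Real.pi * v) ^ (-(1:ℝ)/2) := by
  have h : 0 < 2 * Real.pi * v := by positivity
  have : Real.exp (-(y - m)^2 / (2 * v)) ≤ 1 := by
    apply Real.exp_le_one_iff.mpr
    apply div_nonpos_of_nonpos_of_nonneg (neg_nonpos.mpr (sq_nonneg _)) (by positivity)
  calc gauss1 y m v ≤ (2 * Real.pi * v) ^ (-(1:ℝ)/2) * 1 := by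
        exact mul_le_mul_of_nonneg_left this (le_of_lt (Real.rpow_pos_of_pos h _))
    _ = _ := mul_one _

lemma gauss1_hasDerivAt {v : ℝ} (hv : 0 < v) (m y : ℝ) :
    HasDerivAt (fun y => gauss1 y m v) (gauss1 y m v * ((m - y)/v)) y := by
  have h1 : HasDerivAt (fun y : ℝ => -(y - m)^2 / (2*v)) ((m - y)/v) y := by
    have : HasDerivAt (fun y : ℝ => (y - m)) 1 y := (hasDerivAt_id y).sub_const m
    have h2 := (this.pow 2)
    have h3 := (h2.neg).div_const (2*v)
    refine h3.congr_deriv ?_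
    rw [div_eq_div_iff (by positivity) (by positivity)]
    norm_num
    ring
  have h4 := (h1.exp).const_mul ((2 * Real.pi * v) ^ (-(1:ℝ)/2))
  refine h4.congr_deriv ?_
  unfold gauss1; ring

lemma gauss1_continuous_m {y v : ℝ} : Continuous (fun m => gauss1 y m v) := by
  unfold gauss1; fun_prop

noncomputable def Lmap {d : ℕ} (a s2 : ℝ) (z x : Fin d → ℝ) : (Fin d → ℝ) →L[ℝ] ℝ :=
  ∑ j, ((∏ k, gauss1 (x k) (a * z k) s2) * ((a * z j - x j)/s2)) • ContinuousLinearMap.proj j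

lemma Lmap_apply {d : ℕ} (a s2 : ℝ) (z x v : Fin d → ℝ) :
    Lmap a s2 z x v = ∑ j, ((∏ k, gauss1 (x k) (a * z k) s2) * ((a * z j - x j)/s2)) * v j := by
  simp [Lmap]

lemma Lmap_apply_single {d : ℕ} (a s2 : ℝ) (z x : Fin d → ℝ) (j : Fin d) :
    Lmap a s2 z x (Pi.single j 1) = (∏ k, gauss1 (x k) (a * z k) s2) * ((a * z j - x j)/s2) := by
  rw [Lmap_apply]
  rw [Finset.sum_eq_single j]
  · simp
  · intro b _ hb; simp [Pi.single_apply, hb]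
  · simp

lemma Lmap_norm_le {d : ℕ} (a s2 : ℝ) (z x : Fin d → ℝ) :
    ‖Lmap a s2 z x‖ ≤ ∑ j, |(∏ k, gauss1 (x k) (a * z k) s2) * ((a * z j - x j)/s2)| := by
  apply ContinuousLinearMap.opNorm_le_bound
  · positivity
  · intro v
    rw [Lmap_apply]
    calc ‖∑ j, ((∏ k, gauss1 (x k) (a * z k) s2) * ((a * z j - x j)/s2)) * v j‖
        ≤ ∑ j, ‖((∏ k, gauss1 (x k) (a * z k) s2) * ((a * z j - x j)/s2)) * v j‖ :=
          norm_sum_le _ _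
      _ ≤ ∑ j, |(∏ k, gauss1 (x k) (a * z k) s2) * ((a * z j - x j)/s2)| * ‖v‖ := by
          apply Finset.sum_le_sum
          intro j _
          rw [norm_mul]
          exact mul_le_mul_of_nonneg_left (norm_le_pi_norm v j) (norm_nonneg _)
      _ = _ := by rw [← Finset.sum_mul]

lemma Lmap_continuous {d : ℕ} (a s2 : ℝ) (x : Fin d → ℝ) :
    Continuous (fun z : Fin d → ℝ => Lmap a s2 z x) := by
  apply continuous_finset_sum
  intro j _
  have hc : Continuous (fun z : Fin d → ℝ =>
      (∏ k, gauss1 (x k) (a * z k) s2) * ((a * z j - x j)/s2)) := by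
    apply Continuous.mul
    · exact continuous_finset_prod _ fun k _ =>
        gauss1_continuous_m.comp ((continuous_const.mul (continuous_apply k)))
    · fun_prop
  exact hc.smul continuous_const

lemma hasFDerivAt_G {d : ℕ} {s2 : ℝ} (hs2 : 0 < s2) (a : ℝ) (z x : Fin d → ℝ) :
    HasFDerivAt (fun x : Fin d → ℝ => ∏ j, gauss1 (x j) (a * z j) s2)
      (Lmap a s2 z x) x := by
  have h : ∀ j : Fin d, HasFDerivAt (fun x : Fin d → ℝ => gauss1 (x j) (a * z j) s2)
      ((gauss1 (x j) (a * z j) s2 * ((a * z j - x j)/s2)) • ContinuousLinearMap.proj (R := ℝ) (φ := fun _ : Fin d => ℝ) j) x := by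
    intro j
    have := (gauss1_hasDerivAt hs2 (a * z j) (x j)).comp_hasFDerivAt x
      ((ContinuousLinearMap.proj (R := ℝ) (φ := fun _ : Fin d => ℝ) j).hasFDerivAt)
    exact this
  have h2 := HasFDerivAt.finset_prod (u := Finset.univ) (fun j _ => h j)
  refine h2.congr_fderiv ?_
  symm
  unfold Lmap
  apply Finset.sum_congr rfl
  intro j _
  rw [smul_smul, ← mul_assoc]
  congr 2
  rw [mul_comm]
  rw [← Finset.prod_erase_mul Finset.univ _ (Finset.mem_univ j)]
  ring

lemma Gprod_continuous {d : ℕ} (a s2 : ℝ) (x : Fin d → ℝ) :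
    Continuous (fun z : Fin d → ℝ => ∏ j, gauss1 (x j) (a * z j) s2) :=
  continuous_finset_prod _ fun k _ =>
    gauss1_continuous_m.comp ((continuous_const.mul (continuous_apply k)))

lemma Gprod_nonneg {d : ℕ} {s2 : ℝ} (hs2 : 0 < s2) (a : ℝ) (z x : Fin d → ℝ) :
    0 ≤ ∏ j, gauss1 (x j) (a * z j) s2 :=
  Finset.prod_nonneg fun j _ => (gauss1_pos hs2 _ _).le

lemma Gprod_le {d : ℕ} {s2 : ℝ} (hs2 : 0 < s2) (a : ℝ) (z x : Fin d → ℝ) :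
    ∏ j, gauss1 (x j) (a * z j) s2 ≤ ((2 * Real.pi * s2) ^ (-(1:ℝ)/2)) ^ d := by
  calc ∏ j, gauss1 (x j) (a * z j) s2
      ≤ ∏ _j : Fin d, (2 * Real.pi * s2) ^ (-(1:ℝ)/2) :=
        Finset.prod_le_prod (fun j _ => (gauss1_pos hs2 _ _).le)
          (fun j _ => gauss1_le hs2 _ _)
    _ = _ := by rw [Finset.prod_const, Finset.card_univ, Fintype.card_fin]

lemma keyDeriv {d : ℕ} {a s2 : ℝ} (hs2 : 0 < s2) (q : (Fin d → ℝ) → ℝ)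
    (hqm : Measurable q) (hqi : Integrable q) (hqs : HasCompactSupport q) (x₀ : Fin d → ℝ) :
    Integrable (fun z => q z • Lmap a s2 z x₀) ∧
    HasFDerivAt (fun x => ∫ z, (∏ j, gauss1 (x j) (a * z j) s2) * q z)
      (∫ z, q z • Lmap a s2 z x₀) x₀ := by
  obtain ⟨R, hR⟩ := hqs.isBounded.subset_closedBall 0
  set R' : ℝ := max R 0 with hR'def
  set B : ℝ := ((2 * Real.pi * s2) ^ (-(1:ℝ)/2)) ^ d with hBdef
  have hB : 0 ≤ B := by positivity
  set C : ℝ := (d : ℝ) * (B * ((|a| * R' + (‖x₀‖ + 1))/s2)) with hCdef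
  have hC : 0 ≤ C := by positivity
  -- the norm bound
  have hLb : ∀ z, z ∈ tsupport q → ∀ x ∈ Metric.ball x₀ 1, ‖Lmap a s2 z x‖ ≤ C := by
    intro z hz x hx
    refine (Lmap_norm_le a s2 z x).trans ?_
    have hzj : ∀ j, |z j| ≤ R' := by
      intro j
      have h1 : ‖z j‖ ≤ ‖z‖ := norm_le_pi_norm z j
      have h2 : ‖z‖ ≤ R := by
        have := hR hz
        rwa [Metric.mem_closedBall, dist_zero_right] at this
      calc |z j| ≤ R := by rw [← Real.norm_eq_abs]; exact h1.trans h2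
        _ ≤ R' := le_max_left _ _
    have hxj : ∀ j, |x j| ≤ ‖x₀‖ + 1 := by
      intro j
      have h1 : ‖x j‖ ≤ ‖x‖ := norm_le_pi_norm x j
      have h2 : ‖x‖ ≤ ‖x₀‖ + 1 := by
        have h3 : ‖x - x₀‖ < 1 := by rwa [Metric.mem_ball, dist_eq_norm] at hx
        calc ‖x‖ = ‖x₀ + (x - x₀)‖ := by ring_nf
          _ ≤ ‖x₀‖ + ‖x - x₀‖ := norm_add_le _ _
          _ ≤ ‖x₀‖ + 1 := by linarith
      rw [← Real.norm_eq_abs]; exact h1.trans h2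
    have hterm : ∀ j : Fin d, |(∏ k, gauss1 (x k) (a * z k) s2) * ((a * z j - x j)/s2)|
        ≤ B * ((|a| * R' + (‖x₀‖ + 1))/s2) := by
      intro j
      rw [abs_mul]
      apply mul_le_mul
      · rw [abs_of_nonneg (Gprod_nonneg hs2 a z x)]; exact Gprod_le hs2 a z x
      · rw [abs_div, abs_of_pos hs2]
        apply div_le_div_of_nonneg_right ?_ hs2.le |>.trans le_rfl
        calc |a * z j - x j| ≤ |a * z j| + |x j| := abs_sub _ _
          _ = |a| * |z j| + |x j| := by rw [abs_mul]
          _ ≤ |a| * R' + (‖x₀‖ + 1) := by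
              have := hzj j; have := hxj j
              have ha0 : 0 ≤ |a| := abs_nonneg a
              nlinarith [hzj j, hxj j, abs_nonneg (z j)]
      · positivity
      · exact hB
    calc ∑ j, |(∏ k, gauss1 (x k) (a * z k) s2) * ((a * z j - x j)/s2)|
        ≤ ∑ _j : Fin d, B * ((|a| * R' + (‖x₀‖ + 1))/s2) :=
          Finset.sum_le_sum fun j _ => hterm j
      _ = C := by rw [Finset.sum_const, Finset.card_univ, Fintype.card_fin, nsmul_eq_mul, hCdef]
  have hbound : ∀ z, ∀ x ∈ Metric.ball x₀ 1, ‖q z • Lmap a s2 z x‖ ≤ C * |q z| := by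
    intro z x hx
    by_cases hz : z ∈ tsupport q
    · rw [norm_smul (q z) (Lmap a s2 z x), Real.norm_eq_abs, mul_comm]
      exact mul_le_mul_of_nonneg_right (hLb z hz x hx) (abs_nonneg _)
    · have : q z = 0 := image_eq_zero_of_notMem_tsupport hz
      simp [this]
  have hF'measb : ∀ x, AEStronglyMeasurable (fun z => q z • Lmap a s2 z x) volume := by
    intro x
    exact hqm.aestronglyMeasurable.smul (Lmap_continuous a s2 x).aestronglyMeasurable
  have hboundint : Integrable (fun z => C * |q z|) volume := (hqi.abs.const_mul C)
  have hF'int : Integrable (fun z => q z • Lmap a s2 z x₀) volume := by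
    apply Integrable.mono' hboundint (hF'measb x₀)
    exact Filter.Eventually.of_forall fun z =>
      hbound z x₀ (Metric.mem_ball_self one_pos)
  refine ⟨hF'int, ?_⟩
  have hFint : Integrable (fun z => (∏ j, gauss1 (x₀ j) (a * z j) s2) * q z) volume := by
    apply Integrable.bdd_mul (c := B) hqi ((Gprod_continuous a s2 x₀)).aestronglyMeasurable
    exact Filter.Eventually.of_forall fun z => by
      rw [Real.norm_eq_abs, abs_of_nonneg (Gprod_nonneg hs2 a z x₀)]
      exact Gprod_le hs2 a z x₀
  exact hasFDerivAt_integral_of_dominated_of_fderiv_le (𝕜 := ℝ)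
    (F := fun x z => (∏ j, gauss1 (x j) (a * z j) s2) * q z)
    (F' := fun x z => q z • Lmap a s2 z x)
    (bound := fun z => C * |q z|) (Metric.ball_mem_nhds x₀ one_pos)
    (Filter.Eventually.of_forall fun x =>
      ((Gprod_continuous a s2 x).measurable.mul hqm).aestronglyMeasurable)
    hFint (hF'measb x₀)
    (Filter.Eventually.of_forall fun z x hx => hbound z x hx)
    hboundint
    (Filter.Eventually.of_forall fun z x _ =>
      (hasFDerivAt_G hs2 a z x).mul_const (q z))

lemma integrable_Gq {d : ℕ} {a s2 : ℝ} (hs2 : 0 < s2) (q : (Fin d → ℝ) → ℝ)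
    (hqm : Measurable q) (hqi : Integrable q) (x : Fin d → ℝ) :
    Integrable (fun z => (∏ j, gauss1 (x j) (a * z j) s2) * q z) volume := by
  apply Integrable.bdd_mul (c := ((2 * Real.pi * s2) ^ (-(1:ℝ)/2)) ^ d) hqi ((Gprod_continuous a s2 x)).aestronglyMeasurable
  exact Filter.Eventually.of_forall fun z => by
    rw [Real.norm_eq_abs, abs_of_nonneg (Gprod_nonneg hs2 a z x)]
    exact Gprod_le hs2 a z x

lemma integrable_Gq_smul {d : ℕ} {a s2 : ℝ} (hs2 : 0 < s2) (q : (Fin d → ℝ) → ℝ)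
    (hqm : Measurable q) (hqi : Integrable q) (hqs : HasCompactSupport q) (x : Fin d → ℝ) :
    Integrable (fun z => ((∏ j, gauss1 (x j) (a * z j) s2) * q z) • z) volume := by
  obtain ⟨R, hR⟩ := hqs.isBounded.subset_closedBall 0
  set R' : ℝ := max R 0 with hR'def
  set B : ℝ := ((2 * Real.pi * s2) ^ (-(1:ℝ)/2)) ^ d with hBdef
  have hB : 0 ≤ B := by positivity
  have hmeas : AEStronglyMeasurable (fun z : Fin d → ℝ =>
      ((∏ j, gauss1 (x j) (a * z j) s2) * q z) • z) volume := by
    exact (((Gprod_continuous a s2 x).measurable.mul hqm).smul measurable_id).aestronglyMeasurable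
  apply Integrable.mono' ((hqi.abs.const_mul (B * R'))) hmeas
  apply Filter.Eventually.of_forall
  intro z
  by_cases hz : z ∈ tsupport q
  · have hzn : ‖z‖ ≤ R' := by
      have := hR hz
      rw [Metric.mem_closedBall, dist_zero_right] at this
      exact this.trans (le_max_left _ _)
    rw [norm_smul, Real.norm_eq_abs, abs_mul, abs_of_nonneg (Gprod_nonneg hs2 a z x)]
    calc (∏ j, gauss1 (x j) (a * z j) s2) * |q z| * ‖z‖
        ≤ B * |q z| * R' := by
          apply mul_le_mul _ hzn (norm_nonneg _) (by positivity)
          exact mul_le_mul_of_nonneg_right (Gprod_le hs2 a z x) (abs_nonneg _)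
      _ = B * R' * |q z| := by ring
  · have : q z = 0 := image_eq_zero_of_notMem_tsupport hz
    simp [this]

lemma integral_pos_of_support_eq {d : ℕ} {f p : (Fin d → ℝ) → ℝ}
    (hf0 : ∀ z, 0 ≤ f z) (hfi : Integrable f volume)
    (hp1 : (∫ z, p z) = 1) (hp0 : ∀ z, 0 ≤ p z) (hpi : Integrable p volume)
    (hsupp : Function.support f = Function.support p) :
    0 < ∫ z, f z := by
  rw [integral_pos_iff_support_of_nonneg hf0 hfi, hsupp]
  rw [← integral_pos_iff_support_of_nonneg hp0 hpi, hp1]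
  exact one_pos

lemma keyDeriv_apply {d : ℕ} {a s2 : ℝ} (hs2 : 0 < s2) (q : (Fin d → ℝ) → ℝ)
    (hqm : Measurable q) (hqi : Integrable q) (hqs : HasCompactSupport q)
    (x : Fin d → ℝ) (j : Fin d) :
    (∫ z, q z • Lmap a s2 z x) (Pi.single j 1)
      = (a/s2) * (∫ z, ((∏ k, gauss1 (x k) (a * z k) s2) * q z) • z) j
        - (x j/s2) * ∫ z, (∏ k, gauss1 (x k) (a * z k) s2) * q z := by
  have hGq := integrable_Gq (a := a) hs2 q hqm hqi x
  have hGqz := integrable_Gq_smul (a := a) hs2 q hqm hqi hqs x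
  have hGqzj : Integrable (fun z =>
      ((∏ k, gauss1 (x k) (a * z k) s2) * q z) * z j) volume := by
    have := (ContinuousLinearMap.proj (R := ℝ) (φ := fun _ : Fin d => ℝ) j).integrable_comp hGqz
    simpa [smul_eq_mul] using this
  have hNj : (∫ z, ((∏ k, gauss1 (x k) (a * z k) s2) * q z) • z) j
      = ∫ z, ((∏ k, gauss1 (x k) (a * z k) s2) * q z) * z j := by
    have := (ContinuousLinearMap.proj (R := ℝ) (φ := fun _ : Fin d => ℝ) j).integral_comp_comm hGqz
    simpa [smul_eq_mul] using this.symm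
  rw [ContinuousLinearMap.integral_apply (keyDeriv hs2 q hqm hqi hqs x).1, hNj]
  rw [← integral_const_mul (a/s2), ← integral_const_mul (x j/s2), ← integral_sub
    (hGqzj.const_mul _) (hGq.const_mul _)]
  apply integral_congr_ae
  apply Filter.Eventually.of_forall
  intro z
  show (q z • Lmap a s2 z x) (Pi.single j 1) = _
  rw [ContinuousLinearMap.smul_apply, Lmap_apply_single, smul_eq_mul]
  field_simp

theorem stmt16 {d : ℕ} (α σ : ℝ → ℝ) (hsch : IsScheduler α σ)
    (t : ℝ) (ht : t ∈ Set.Ioo (0:ℝ) 1)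
    (p : (Fin d → ℝ) → ℝ) (hp : IsProbDensity p) (hps : HasCompactSupport p)
    (r : (Fin d → ℝ) → ℝ) (hrm : Measurable r) (hrb : ∃ C, ∀ z, |r z| ≤ C)
    (Zr : ℝ) (hZr : Zr = ∫ z, p z * Real.exp (r z))
    (pr : (Fin d → ℝ) → ℝ) (hpr : pr = fun z => p z * Real.exp (r z) / Zr)
    (V : (Fin d → ℝ) → ℝ)
    (hV : V = fun x => Real.log (∫ z, Real.exp (r z) * post α σ p t z x)) :
    0 < Zr ∧
    ∀ x : Fin d → ℝ, 0 < marginal α σ p t x ∧ DifferentiableAt ℝ V x ∧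
      denoiser α σ pr t x
        = denoiser α σ p t x
          + ((σ t)^2 / α t) • (fun j => fderiv ℝ V x (Pi.single j 1)) := by
  obtain ⟨hpm, hp0, hp1⟩ := hp
  have hmem0 : (0:ℝ) ∈ Set.Icc (0:ℝ) 1 := by constructor <;> norm_num
  have hmem1 : (1:ℝ) ∈ Set.Icc (0:ℝ) 1 := by constructor <;> norm_num
  have hmemt : t ∈ Set.Icc (0:ℝ) 1 := ⟨ht.1.le, ht.2.le⟩
  have ha : 0 < α t := by
    have := hsch.mono_a hmem0 hmemt ht.1
    rwa [hsch.a0] at this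
  have hs : 0 < σ t := by
    have := hsch.anti_s hmemt hmem1 ht.2
    rwa [hsch.s1] at this
  have hs2 : 0 < (σ t)^2 := by positivity
  have hpi : Integrable p volume := by
    by_contra h
    rw [integral_undef h] at hp1
    exact zero_ne_one hp1
  obtain ⟨Cr, hCr⟩ := hrb
  set q0 : (Fin d → ℝ) → ℝ := fun z => p z * Real.exp (r z) with hq0def
  have hq0m : Measurable q0 := hpm.mul (Real.measurable_exp.comp hrm)
  have hq0i : Integrable q0 volume := by
    have h1 : Integrable (fun z => Real.exp (r z) * p z) volume := by
      apply hpi.bdd_mul (c := Real.exp Cr) ((Real.measurable_exp.comp hrm)).aestronglyMeasurable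
      refine Filter.Eventually.of_forall fun z => ?_
      show ‖Real.exp (r z)‖ ≤ Real.exp Cr
      rw [Real.norm_eq_abs, abs_of_pos (Real.exp_pos _)]
      exact Real.exp_le_exp.mpr ((le_abs_self _).trans (hCr z))
    exact h1.congr (Filter.Eventually.of_forall fun z => mul_comm _ _)
  have hq0s : HasCompactSupport q0 := hps.mul_right
  have hq00 : ∀ z, 0 ≤ q0 z := fun z => mul_nonneg (hp0 z) (Real.exp_pos _).le
  have hsupp0 : Function.support q0 = Function.support p := by
    ext z
    simp [Function.mem_support, hq0def, Real.exp_ne_zero]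
  have hZrpos : 0 < Zr := by
    rw [hZr]
    exact integral_pos_of_support_eq hq00 hq0i hp1 hp0 hpi hsupp0
  refine ⟨hZrpos, fun x => ?_⟩
  -- positivity of marginal at every point
  have hMpos : ∀ y, 0 < marginal α σ p t y := by
    intro y
    apply integral_pos_of_support_eq _ (integrable_Gq (a := α t) hs2 p hpm hpi y) hp1 hp0 hpi
    · ext z
      simp only [Function.mem_support, mul_ne_zero_iff]
      exact ⟨fun h => h.2, fun h => ⟨(Finset.prod_pos fun j _ => gauss1_pos hs2 _ _).ne', h⟩⟩
    · exact fun z => mul_nonneg (Gprod_nonneg hs2 _ _ _) (hp0 z)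
  have hMrpos : ∀ y : Fin d → ℝ, 0 < ∫ z, (∏ j, gauss1 (y j) (α t * z j) ((σ t)^2)) * q0 z := by
    intro y
    apply integral_pos_of_support_eq _ (integrable_Gq (a := α t) hs2 q0 hq0m hq0i y) hp1 hp0 hpi
    · rw [← hsupp0]
      ext z
      simp only [Function.mem_support, mul_ne_zero_iff]
      exact ⟨fun h => h.2, fun h => ⟨(Finset.prod_pos fun j _ => gauss1_pos hs2 _ _).ne', h⟩⟩
    · exact fun z => mul_nonneg (Gprod_nonneg hs2 _ _ _) (hq00 z)
  have hDM := keyDeriv (a := α t) hs2 p hpm hpi hps x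
  have hDMr := keyDeriv (a := α t) hs2 q0 hq0m hq0i hq0s x
  -- rewrite V
  have hVeq : V = fun y => Real.log (∫ z, (∏ j, gauss1 (y j) (α t * z j) ((σ t)^2)) * q0 z)
      - Real.log (marginal α σ p t y) := by
    rw [hV]
    funext y
    have h1 : (∫ z, Real.exp (r z) * post α σ p t z y)
        = (marginal α σ p t y)⁻¹ * ∫ z, (∏ j, gauss1 (y j) (α t * z j) ((σ t)^2)) * q0 z := by
      rw [← integral_const_mul]
      apply integral_congr_ae (Filter.Eventually.of_forall fun z => ?_)
      unfold post
      rw [hq0def]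
      field_simp
    rw [h1, Real.log_mul (inv_ne_zero (hMpos y).ne') (hMrpos y).ne', Real.log_inv]
    ring
  have hVder : HasFDerivAt V
      (((∫ z, (∏ j, gauss1 (x j) (α t * z j) ((σ t)^2)) * q0 z))⁻¹ •
          (∫ z, q0 z • Lmap (α t) ((σ t)^2) z x)
        - (marginal α σ p t x)⁻¹ • (∫ z, p z • Lmap (α t) ((σ t)^2) z x)) x := by
    rw [hVeq]
    exact (hDMr.2.log (hMrpos x).ne').sub (hDM.2.log (hMpos x).ne')
  refine ⟨hMpos x, hVder.differentiableAt, ?_⟩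
  -- denoiser identities
  have hDen : denoiser α σ p t x
      = (marginal α σ p t x)⁻¹ • (∫ z, ((∏ j, gauss1 (x j) (α t * z j) ((σ t)^2)) * p z) • z) := by
    unfold denoiser
    rw [← integral_smul]
    apply integral_congr_ae (Filter.Eventually.of_forall fun z => ?_)
    unfold post
    rw [smul_smul, div_eq_inv_mul]
  have hmargr : marginal α σ pr t x
      = Zr⁻¹ * ∫ z, (∏ j, gauss1 (x j) (α t * z j) ((σ t)^2)) * q0 z := by
    unfold marginal
    rw [← integral_const_mul]
    apply integral_congr_ae (Filter.Eventually.of_forall fun z => ?_)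
    rw [hpr, hq0def]
    field_simp
  have hDenr : denoiser α σ pr t x
      = (∫ z, (∏ j, gauss1 (x j) (α t * z j) ((σ t)^2)) * q0 z)⁻¹ •
          (∫ z, ((∏ j, gauss1 (x j) (α t * z j) ((σ t)^2)) * q0 z) • z) := by
    unfold denoiser
    rw [← integral_smul]
    apply integral_congr_ae (Filter.Eventually.of_forall fun z => ?_)
    unfold post
    rw [hmargr, hpr, hq0def, smul_smul]
    congr 1
    field_simp
  -- final computation
  funext j
  have hfd : fderiv ℝ V x (Pi.single j 1)
      = (∫ z, (∏ k, gauss1 (x k) (α t * z k) ((σ t)^2)) * q0 z)⁻¹ *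
          ((α t/(σ t)^2) * (∫ z, ((∏ k, gauss1 (x k) (α t * z k) ((σ t)^2)) * q0 z) • z) j
            - (x j/(σ t)^2) * ∫ z, (∏ k, gauss1 (x k) (α t * z k) ((σ t)^2)) * q0 z)
        - (marginal α σ p t x)⁻¹ *
          ((α t/(σ t)^2) * (∫ z, ((∏ k, gauss1 (x k) (α t * z k) ((σ t)^2)) * p z) • z) j
            - (x j/(σ t)^2) * ∫ z, (∏ k, gauss1 (x k) (α t * z k) ((σ t)^2)) * p z) := by
    rw [hVder.fderiv]
    rw [ContinuousLinearMap.sub_apply, ContinuousLinearMap.smul_apply,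
      ContinuousLinearMap.smul_apply, smul_eq_mul, smul_eq_mul]
    rw [keyDeriv_apply hs2 q0 hq0m hq0i hq0s x j, keyDeriv_apply hs2 p hpm hpi hps x j]
  have hMx := hMpos x
  have hMrx := hMrpos x
  have hmarg_eq : marginal α σ p t x
      = ∫ z, (∏ k, gauss1 (x k) (α t * z k) ((σ t)^2)) * p z := rfl
  rw [Pi.add_apply, hDen, hDenr, Pi.smul_apply, Pi.smul_apply, Pi.smul_apply,
    smul_eq_mul, smul_eq_mul, smul_eq_mul, hfd]
  rw [hmarg_eq] at hMx ⊢
  field_simp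
  ring
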